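/- arXiv:1912.00892 — 4 statements merged into one kernel-verified Lean document; each statement's English description precedes it below -/
import Mathlib

section
/- If F : [a,b] → ℝ is a continuous function that is of bounded variation on [a,b] and satisfies Lusin's condition (N) (the image of every Lebesgue null set is null), then F is absolutely continuous on [a,b]. -/
/-!
A function of bounded variation is differentiable almost everywhere with integrable derivative.
On the set where `F` is differentiable, the one-dimensional area inequality bounds the measure of
the image by `∫ |F'|`; on the null remainder, condition (N) makes the image null. As a continuous
`F` maps `[u, v]` onto an interval of length at least `|F v - F u|`, this gives
`|F v - F u| ≤ ∫_u^v |F'|`, and absolute continuity of the integral concludes.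
-/

open Set MeasureTheory

/-- Lusin's condition (N) on `[a,b]`: the image of every Lebesgue-null subset of `[a,b]`
is Lebesgue-null. -/
def LusinN (F : ℝ → ℝ) (a b : ℝ) : Prop :=
  ∀ E : Set ℝ, E ⊆ Set.Icc a b → volume E = 0 → volume (F '' E) = 0

/-- Absolute continuity of `F` on `[a,b]` (standard ε-δ definition with finitely many
pairwise non-overlapping subintervals). -/
def AbsolutelyContinuousOnIcc (F : ℝ → ℝ) (a b : ℝ) : Prop :=
  ∀ ε > (0 : ℝ), ∃ δ > (0 : ℝ), ∀ (n : ℕ) (u v : Fin n → ℝ),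
    (∀ i, u i ≤ v i) → (∀ i, Set.Icc (u i) (v i) ⊆ Set.Icc a b) →
    (∀ i j, i ≠ j → Disjoint (Set.Ioo (u i) (v i)) (Set.Ioo (u j) (v j))) →
    (∑ i, (v i - u i)) < δ → (∑ i, |F (v i) - F (u i)|) < ε

open scoped ENNReal

theorem ofReal_abs_sub_le_volume_image {F : ℝ → ℝ} {u v : ℝ} (huv : u ≤ v)
    (hF : ContinuousOn F (Icc u v)) :
    ENNReal.ofReal |F v - F u| ≤ volume (F '' Icc u v) := by
  rcases le_total (F u) (F v) with h | h
  · calc ENNReal.ofReal |F v - F u| = volume (Icc (F u) (F v)) := by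
          rw [Real.volume_Icc, abs_of_nonneg (sub_nonneg.2 h)]
      _ ≤ volume (F '' Icc u v) := measure_mono (intermediate_value_Icc huv hF)
  · calc ENNReal.ofReal |F v - F u| = volume (Icc (F v) (F u)) := by
          rw [Real.volume_Icc, abs_sub_comm, abs_of_nonneg (sub_nonneg.2 h)]
      _ ≤ volume (F '' Icc u v) := measure_mono (intermediate_value_Icc' huv hF)

theorem volume_image_le_lintegral_enorm_deriv {F : ℝ → ℝ} {s : Set ℝ} (hs : MeasurableSet s)
    (hdiff : ∀ᵐ x, x ∈ s → DifferentiableAt ℝ F x)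
    (hN : ∀ E ⊆ s, volume E = 0 → volume (F '' E) = 0) :
    volume (F '' s) ≤ ∫⁻ x in s, ‖deriv F x‖ₑ := by
  obtain ⟨T, hbad, hT, hT0⟩ := exists_measurable_superset_of_null (ae_iff.1 hdiff)
  have hderiv : ∀ x ∈ s \ T,
      HasFDerivWithinAt F ((1 : ℝ →L[ℝ] ℝ).smulRight (deriv F x)) (s \ T) x := by
    rintro x ⟨hxs, hxT⟩
    have hx : DifferentiableAt ℝ F x := by
      by_contra h
      exact hxT (hbad fun h' => h (h' hxs))
    exact hx.hasDerivAt.hasFDerivAt.hasFDerivWithinAt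
  have hgood : volume (F '' (s \ T)) ≤ ∫⁻ x in s \ T, ‖deriv F x‖ₑ := by
    simpa only [ContinuousLinearMap.det_smulRight, one_apply_eq_self, one_mul,
      ← Real.enorm_eq_ofReal_abs] using
      addHaar_image_le_lintegral_abs_det_fderiv volume (hs.diff hT) hderiv
  have hnull : volume (F '' (s ∩ T)) = 0 :=
    hN _ inter_subset_left (measure_mono_null inter_subset_right hT0)
  calc volume (F '' s) = volume (F '' (s \ T) ∪ F '' (s ∩ T)) := by
        rw [← image_union, sdiff_union_inter]
    _ ≤ volume (F '' (s \ T)) + volume (F '' (s ∩ T)) := measure_union_le _ _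
    _ ≤ ∫⁻ x in s, ‖deriv F x‖ₑ := by
        rw [hnull, add_zero]
        exact hgood.trans (lintegral_mono_set sdiff_subset)

theorem volume_iUnion_Ioo_le_ofReal_sum {n : ℕ} (u v : Fin n → ℝ) (huv : ∀ i, u i ≤ v i) :
    volume (⋃ i, Ioo (u i) (v i)) ≤ ENNReal.ofReal (∑ i, (v i - u i)) := by
  rw [ENNReal.ofReal_sum_of_nonneg fun i _ => sub_nonneg.2 (huv i)]
  simpa only [Real.volume_Ioo] using measure_iUnion_fintype_le volume fun i => Ioo (u i) (v i)

theorem absolutelyContinuousOnIcc_of_le_lintegral {F : ℝ → ℝ} {a b : ℝ} {g : ℝ → ℝ≥0∞}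
    (hg : ∫⁻ x in Icc a b, g x ≠ ∞)
    (hF : ∀ u v, a ≤ u → u ≤ v → v ≤ b → ENNReal.ofReal |F v - F u| ≤ ∫⁻ x in Icc u v, g x) :
    AbsolutelyContinuousOnIcc F a b := by
  intro ε hε
  obtain ⟨η, hη, hηε⟩ := exists_pos_setLIntegral_lt_of_measure_lt hg (ENNReal.ofReal_pos.2 hε).ne'
  obtain ⟨δ, -, hδ, hδη⟩ := ENNReal.lt_iff_exists_real_btwn.1 hη
  rw [ENNReal.ofReal_pos] at hδ
  refine ⟨δ, hδ, fun n u v huv hsub hdisj hsum => ?_⟩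
  have hends : ∀ i, a ≤ u i ∧ v i ≤ b := fun i =>
    ⟨(hsub i ⟨le_rfl, huv i⟩).1, (hsub i ⟨huv i, le_rfl⟩).2⟩
  have hU : volume.restrict (Icc a b) (⋃ i, Ioo (u i) (v i)) < η :=
    calc volume.restrict (Icc a b) (⋃ i, Ioo (u i) (v i))
        _ ≤ volume (⋃ i, Ioo (u i) (v i)) := Measure.restrict_apply_le _ _
        _ ≤ ENNReal.ofReal (∑ i, (v i - u i)) := volume_iUnion_Ioo_le_ofReal_sum u v huv
        _ < ENNReal.ofReal δ := (ENNReal.ofReal_lt_ofReal_iff hδ).2 hsum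
        _ < η := hδη
  have hsum_le : ∑ i, ENNReal.ofReal |F (v i) - F (u i)| ≤
      ∫⁻ x in ⋃ i, Ioo (u i) (v i), g x ∂volume.restrict (Icc a b) := by
    rw [lintegral_iUnion (fun i => measurableSet_Ioo) hdisj, tsum_fintype]
    refine Finset.sum_le_sum fun i _ => ?_
    rw [Measure.restrict_restrict_of_subset (Ioo_subset_Icc_self.trans (hsub i)),
      setLIntegral_congr Ioo_ae_eq_Icc]
    exact hF _ _ (hends i).1 (huv i) (hends i).2
  rw [← ENNReal.ofReal_lt_ofReal_iff_of_nonneg (Finset.sum_nonneg fun i _ => abs_nonneg _),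
    ENNReal.ofReal_sum_of_nonneg fun i _ => abs_nonneg _]
  exact hsum_le.trans_lt (hηε _ hU)

theorem continuous_bv_lusinN_implies_AC (F : ℝ → ℝ) (a b : ℝ) (hab : a ≤ b)
    (hcont : ContinuousOn F (Set.Icc a b))
    (hbv : BoundedVariationOn F (Set.Icc a b))
    (hN : LusinN F a b) :
    AbsolutelyContinuousOnIcc F a b := by
  rw [← uIcc_of_le hab] at hbv
  have hdiff : ∀ᵐ x, x ∈ Icc a b → DifferentiableAt ℝ F x := by
    simpa only [uIcc_of_le hab] using hbv.ae_differentiableAt_of_mem_uIcc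
  have hfin : ∫⁻ x in Icc a b, ‖deriv F x‖ₑ ≠ ∞ :=
    ((intervalIntegrable_iff_integrableOn_Icc_of_le hab).1
      hbv.intervalIntegrable_deriv).hasFiniteIntegral.ne
  refine absolutelyContinuousOnIcc_of_le_lintegral hfin fun u v hau huv hvb => ?_
  have hsub : Icc u v ⊆ Icc a b := Icc_subset_Icc hau hvb
  calc ENNReal.ofReal |F v - F u| ≤ volume (F '' Icc u v) :=
        ofReal_abs_sub_le_volume_image huv (hcont.mono hsub)
    _ ≤ ∫⁻ x in Icc u v, ‖deriv F x‖ₑ :=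
        volume_image_le_lintegral_enorm_deriv measurableSet_Icc
          (hdiff.mono fun x hx hxuv => hx (hsub hxuv)) fun E hE => hN E (hE.trans hsub)
end

section
/- If f : [0,1] → ℝ is Henstock–Kurzweil integrable and the interval variation of its indefinite integral F(I) = ∫_I f is finite (i.e., sup over finite interval partitions {I₁,…,Iₙ} of [0,1] of ∑ᵢ |F(Iᵢ)| < ∞), then f is Lebesgue integrable on [0,1]. -/
open Set MeasureTheory

/-- `x : Fin (n+1) → ℝ` is a partition of `[a,b]` into `n` consecutive closed intervals. -/
def IsIntervalPartition (n : ℕ) (a b : ℝ) (x : Fin (n + 1) → ℝ) : Prop :=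
  Monotone x ∧ x 0 = a ∧ x (Fin.last n) = b

/-- The tags form a Perron tagging: each tag belongs to its interval. -/
def IsPerronTagged (n : ℕ) (x : Fin (n + 1) → ℝ) (t : Fin n → ℝ) : Prop :=
  ∀ i : Fin n, t i ∈ Set.Icc (x i.castSucc) (x i.succ)

/-- The tagged partition is `δ`-fine: `Iᵢ ⊆ [tᵢ - δ(tᵢ), tᵢ + δ(tᵢ)]`. -/
def IsDeltaFine (δ : ℝ → ℝ) (n : ℕ) (x : Fin (n + 1) → ℝ) (t : Fin n → ℝ) : Prop :=
  ∀ i : Fin n, Set.Icc (x i.castSucc) (x i.succ) ⊆ Set.Icc (t i - δ (t i)) (t i + δ (t i))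

/-- Henstock–Kurzweil integrability of `f` on `[a,b]` with integral `I`. -/
def HasHKIntegral (f : ℝ → ℝ) (a b : ℝ) (I : ℝ) : Prop :=
  ∀ ε > (0 : ℝ), ∃ δ : ℝ → ℝ, (∀ s, 0 < δ s) ∧
    ∀ (n : ℕ) (x : Fin (n + 1) → ℝ) (t : Fin n → ℝ),
      IsIntervalPartition n a b x → IsPerronTagged n x t → IsDeltaFine δ n x t →
      |(∑ i : Fin n, (x i.succ - x i.castSucc) * f (t i)) - I| < ε

/-!
By Henstock's lemma, the Riemann-sum errors `F(I) - f(t)|I|` of any finite disjoint family of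
`δ`-fine tagged intervals add up, in absolute value, to at most `2ε`. Combined with the Vitali
covering theorem, this shows that the points `x` where `F(I) - f(x)|I|` fails to be `o(|I|)`
for intervals `I` tagged at `x` form a null set, so `x ↦ F(0, x)` has derivative `f` almost
everywhere. Finite interval variation of `F` says that this primitive has bounded variation,
and the derivative of a function of bounded variation is Lebesgue integrable.
-/

structure TaggedInterval where
  left : ℝ
  right : ℝ
  tag : ℝ

namespace TaggedInterval

variable {δ δ' : ℝ → ℝ} {I : TaggedInterval}

def length (I : TaggedInterval) : ℝ := I.right - I.left

def interval (I : TaggedInterval) : Set ℝ := Icc I.left I.right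

def riemannTerm (f : ℝ → ℝ) (I : TaggedInterval) : ℝ := I.length * f I.tag

structure IsFine (δ : ℝ → ℝ) (I : TaggedInterval) : Prop where
  left_le_tag : I.left ≤ I.tag
  tag_le_right : I.tag ≤ I.right
  tag_sub_le_left : I.tag - δ I.tag ≤ I.left
  right_le_tag_add : I.right ≤ I.tag + δ I.tag

theorem IsFine.left_le_right (h : I.IsFine δ) : I.left ≤ I.right :=
  h.left_le_tag.trans h.tag_le_right

theorem IsFine.mono (h : I.IsFine δ) (hδ : δ I.tag ≤ δ' I.tag) : I.IsFine δ' :=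
  ⟨h.left_le_tag, h.tag_le_right, by linarith [h.tag_sub_le_left],
    by linarith [h.right_le_tag_add]⟩

theorem exists_disjoint_covering_ae (s : Set ℝ) (t : Set TaggedInterval)
    (ht : ∀ I ∈ t, I.left ≤ I.tag ∧ I.tag ≤ I.right ∧ 0 < I.length)
    (hs : ∀ x ∈ s, ∀ ε > 0, ∃ I ∈ t, I.length ≤ ε ∧ I.tag = x) :
    ∃ U ⊆ t, U.Countable ∧ U.PairwiseDisjoint interval ∧
      volume (s \ ⋃ I ∈ U, interval I) = 0 :=
  Vitali.exists_disjoint_covering_ae volume s t 6 length tag interval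
    (fun I hI => by
      rw [Real.closedBall_eq_Icc, interval, length]
      exact Icc_subset_Icc (by linarith [(ht I hI).2.1]) (by linarith [(ht I hI).1]))
    (fun I _ => by
      rw [Real.volume_closedBall, interval, Real.volume_Icc, ← length,
        show 2 * (3 * I.length) = 6 * I.length by ring, ENNReal.ofReal_mul (by norm_num)]
      gcongr; norm_num)
    (fun I hI => by
      rw [interval, interior_Icc]
      exact nonempty_Ioo.2 (sub_pos.1 (ht I hI).2.2))
    (fun I _ => isClosed_Icc) hs

theorem volume_biUnion_interval_le {U : Set TaggedInterval} (hU : U.Countable)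
    (hlen : ∀ I ∈ U, 0 ≤ I.length) {η : ℝ}
    (h : ∀ J : Finset TaggedInterval, ↑J ⊆ U → ∑ I ∈ J, I.length ≤ η) :
    volume (⋃ I ∈ U, interval I) ≤ ENNReal.ofReal η := by
  refine (measure_biUnion_le volume hU _).trans (tsum_le_of_sum_le' (by positivity) fun J => ?_)
  have hJ := h (J.map (Function.Embedding.subtype _)) (by simp)
  rw [Finset.sum_map] at hJ
  calc ∑ I ∈ J, volume (interval I) = ∑ I ∈ J, ENNReal.ofReal (I : TaggedInterval).length :=
        Finset.sum_congr rfl fun I _ => Real.volume_Icc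
    _ = ENNReal.ofReal (∑ I ∈ J, (I : TaggedInterval).length) :=
        (ENNReal.ofReal_sum_of_nonneg fun (I : U) _ => hlen I I.2).symm
    _ ≤ ENNReal.ofReal η := ENNReal.ofReal_le_ofReal hJ

end TaggedInterval

open TaggedInterval

/-- Tagged partitions are lists of tagged intervals from left to right, so that concatenating
partitions is `++`. -/
inductive IsFinePartition (δ : ℝ → ℝ) : ℝ → ℝ → List TaggedInterval → Prop
  | nil (a : ℝ) : IsFinePartition δ a a []
  | cons {I : TaggedInterval} {b : ℝ} {L : List TaggedInterval} :
      I.IsFine δ → IsFinePartition δ I.right b L → IsFinePartition δ I.left b (I :: L)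

def riemannSum (f : ℝ → ℝ) (L : List TaggedInterval) : ℝ := (L.map (riemannTerm f)).sum

@[simp]
theorem riemannSum_nil (f : ℝ → ℝ) : riemannSum f [] = 0 := rfl

@[simp]
theorem riemannSum_cons (f : ℝ → ℝ) (I : TaggedInterval) (L : List TaggedInterval) :
    riemannSum f (I :: L) = I.riemannTerm f + riemannSum f L := List.sum_cons

@[simp]
theorem riemannSum_append (f : ℝ → ℝ) (L L' : List TaggedInterval) :
    riemannSum f (L ++ L') = riemannSum f L + riemannSum f L' := by
  simp [riemannSum]

namespace IsFinePartition

variable {δ δ' : ℝ → ℝ} {a b c : ℝ} {I : TaggedInterval} {L L' : List TaggedInterval}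

theorem singleton (h : I.IsFine δ) : IsFinePartition δ I.left I.right [I] :=
  cons h (nil _)

theorem append (h : IsFinePartition δ a b L) (h' : IsFinePartition δ b c L') :
    IsFinePartition δ a c (L ++ L') := by
  induction h with
  | nil => exact h'
  | cons hI _ ih => exact cons hI (ih h')

theorem mono (h : IsFinePartition δ a b L) (hδ : ∀ s, δ s ≤ δ' s) :
    IsFinePartition δ' a b L := by
  induction h with
  | nil a => exact nil a
  | cons hI _ ih => exact cons (hI.mono (hδ _)) ih

theorem exists_fin (f : ℝ → ℝ) (h : IsFinePartition δ a b L) :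
    ∃ (x : Fin (L.length + 1) → ℝ) (t : Fin L.length → ℝ),
      IsIntervalPartition L.length a b x ∧ IsPerronTagged L.length x t ∧
        IsDeltaFine δ L.length x t ∧
        ∑ i : Fin L.length, (x i.succ - x i.castSucc) * f (t i) = riemannSum f L := by
  induction h with
  | nil a =>
    exact ⟨fun _ => a, finZeroElim, ⟨monotone_const, rfl, rfl⟩, finZeroElim, finZeroElim, by simp⟩
  | @cons I b L hI _ ih =>
    obtain ⟨x, t, ⟨hmono, hx0, hxn⟩, htag, hfine, hsum⟩ := ih
    let x' : Fin (L.length + 2) → ℝ := Fin.cons I.left x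
    let t' : Fin (L.length + 1) → ℝ := Fin.cons I.tag t
    have htag' : IsPerronTagged (L.length + 1) x' t' := by
      refine Fin.cases ?_ (fun i => ?_)
      · simpa [x', t', hx0] using And.intro hI.left_le_tag hI.tag_le_right
      · simpa [x', t', ← Fin.succ_castSucc] using htag i
    refine ⟨x', t', ⟨Fin.monotone_iff_le_succ.2 fun i => (htag' i).1.trans (htag' i).2, rfl, ?_⟩,
      htag', ?_, ?_⟩
    · simpa [x', ← Fin.succ_last] using hxn
    · refine Fin.cases ?_ (fun i => ?_)
      · simpa [x', t', hx0] using
          Icc_subset_Icc hI.tag_sub_le_left hI.right_le_tag_add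
      · simpa [x', t', ← Fin.succ_castSucc] using hfine i
    · simp [x', t', Fin.sum_univ_succ, hsum, hx0, riemannTerm, length]

end IsFinePartition

theorem exists_isFinePartition (δ : ℝ → ℝ) (hδ : ∀ s, 0 < δ s) {a b : ℝ} (hab : a ≤ b) :
    ∃ L, IsFinePartition δ a b L := by
  set S := {y | y ≤ b ∧ ∃ L, IsFinePartition δ a y L}
  have extend : ∀ y ∈ S, ∀ x z, y ≤ x → x ≤ z → z ≤ b → x - δ x ≤ y → z ≤ x + δ x → z ∈ S := by
    rintro y ⟨-, L, hL⟩ x z hyx hxz hzb hy hz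
    exact ⟨hzb, L ++ [⟨y, z, x⟩], hL.append (.singleton (I := ⟨y, z, x⟩) ⟨hyx, hxz, hy, hz⟩)⟩
  have hbdd : BddAbove S := ⟨b, fun y hy => hy.1⟩
  have haS : a ∈ S := ⟨hab, [], .nil a⟩
  set c := sSup S
  have hcb : c ≤ b := csSup_le ⟨a, haS⟩ fun y hy => hy.1
  have hcS : c ∈ S := by
    obtain ⟨y, hyS, hy⟩ := exists_lt_of_lt_csSup ⟨a, haS⟩ (sub_lt_self c (hδ c))
    exact extend y hyS c c (le_csSup hbdd hyS) le_rfl hcb hy.le (by linarith [hδ c])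
  obtain hcb | hcb := hcb.eq_or_lt
  · exact hcb ▸ hcS.2
  · have hz : min b (c + δ c) ∈ S :=
      extend c hcS c _ le_rfl (le_min hcb.le (by linarith [hδ c])) (min_le_left _ _)
        (by linarith [hδ c]) (min_le_right _ _)
    exact absurd (le_csSup hbdd hz) (not_le.2 (lt_min hcb (by linarith [hδ c])))

namespace HasHKIntegral

variable {f : ℝ → ℝ} {a b c I J K : ℝ}

theorem exists_gauge (h : HasHKIntegral f a b I) {ε : ℝ} (hε : 0 < ε) :
    ∃ δ : ℝ → ℝ, (∀ s, 0 < δ s) ∧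
      ∀ L, IsFinePartition δ a b L → |riemannSum f L - I| < ε := by
  obtain ⟨δ, hδ, hsum⟩ := h ε hε
  refine ⟨δ, hδ, fun L hL => ?_⟩
  obtain ⟨x, t, hx, htag, hfine, hxt⟩ := hL.exists_fin f
  simpa [hxt] using hsum _ x t hx htag hfine

theorem exists_isFinePartition_abs_sub_lt (h : HasHKIntegral f a b I) (hab : a ≤ b)
    {δ : ℝ → ℝ} (hδ : ∀ s, 0 < δ s) {η : ℝ} (hη : 0 < η) :
    ∃ L, IsFinePartition δ a b L ∧ |riemannSum f L - I| < η := by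
  obtain ⟨δ', hδ', hsum⟩ := h.exists_gauge hη
  obtain ⟨L, hL⟩ := exists_isFinePartition (fun s => min (δ s) (δ' s))
    (fun s => lt_min (hδ s) (hδ' s)) hab
  exact ⟨L, hL.mono fun s => min_le_left _ _, hsum L (hL.mono fun s => min_le_right _ _)⟩

theorem eq_add (hI : HasHKIntegral f a b I) (hJ : HasHKIntegral f b c J)
    (hK : HasHKIntegral f a c K) (hab : a ≤ b) (hbc : b ≤ c) : K = I + J := by
  refine eq_of_forall_dist_le fun ε hε => ?_
  obtain ⟨δ, hδ, hK⟩ := hK.exists_gauge (by positivity : 0 < ε / 3)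
  obtain ⟨L, hL, hI⟩ := hI.exists_isFinePartition_abs_sub_lt hab hδ (by positivity : 0 < ε / 3)
  obtain ⟨L', hL', hJ⟩ := hJ.exists_isFinePartition_abs_sub_lt hbc hδ (by positivity : 0 < ε / 3)
  have hK := hK _ (hL.append hL')
  rw [riemannSum_append] at hK
  rw [Real.dist_eq, abs_le]
  rw [abs_lt] at hI hJ hK
  constructor <;> linarith

end HasHKIntegral

theorem Finset.sum_abs_le_two_mul_of_forall_subset {ι : Type*} {s : Finset ι} {g : ι → ℝ}
    {ε : ℝ} (h : ∀ t ⊆ s, |∑ i ∈ t, g i| ≤ ε) : ∑ i ∈ s, |g i| ≤ 2 * ε := by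
  rw [← Finset.sum_filter_add_sum_filter_not s (fun i => 0 ≤ g i)]
  have hpos : ∑ i ∈ s.filter (fun i => 0 ≤ g i), |g i| = ∑ i ∈ s.filter (fun i => 0 ≤ g i), g i :=
    Finset.sum_congr rfl fun i hi => abs_of_nonneg (Finset.mem_filter.1 hi).2
  have hneg : ∑ i ∈ s.filter (fun i => ¬0 ≤ g i), |g i| =
      -∑ i ∈ s.filter (fun i => ¬0 ≤ g i), g i := by
    rw [← Finset.sum_neg_distrib]
    exact Finset.sum_congr rfl fun i hi => abs_of_neg (not_le.1 (Finset.mem_filter.1 hi).2)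
  have h₁ := (abs_le.1 (h _ (Finset.filter_subset (fun i => 0 ≤ g i) s))).2
  have h₂ := (abs_le.1 (h _ (Finset.filter_subset (fun i => ¬0 ≤ g i) s))).1
  linarith

section IntervalVariation

variable {F : ℝ → ℝ → ℝ} {A B M : ℝ}
  (hM : ∀ (n : ℕ) (x : Fin (n + 1) → ℝ), IsIntervalPartition n A B x →
    (∑ i : Fin n, |F (x i.castSucc) (x i.succ)|) ≤ M)
include hM

theorem sum_abs_le_of_chain {n : ℕ} {v : ℕ → ℝ} (hv : ∀ j < n, v j ≤ v (j + 1)) (h0 : v 0 = A)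
    (hn : v n = B) : ∑ j ∈ Finset.range n, |F (v j) (v (j + 1))| ≤ M := by
  simpa [Fin.sum_univ_eq_sum_range (fun j => |F (v j) (v (j + 1))|)] using
    hM n (fun i => v i) ⟨Fin.monotone_iff_le_succ.2 fun i => hv i i.2, h0, hn⟩

theorem sum_abs_le_of_monotone {u : ℕ → ℝ} (hu : Monotone u) (huAB : ∀ i, u i ∈ Icc A B)
    (n : ℕ) : ∑ j ∈ Finset.range n, |F (u j) (u (j + 1))| ≤ M := by
  let v : ℕ → ℝ := fun j => if j = 0 then A else if j ≤ n + 1 then u (j - 1) else B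
  have hv : ∀ j < n + 2, v j ≤ v (j + 1) := by
    intro j hj
    rcases j with _ | j
    · simpa [v] using (huAB 0).1
    · simp only [v, Nat.add_one_ne_zero, if_false, Nat.add_sub_cancel]
      split_ifs <;> first | exact hu (by omega) | exact (huAB _).2 | omega
  have hpad := sum_abs_le_of_chain hM hv rfl (by simp [v])
  rw [Finset.sum_range_succ, Finset.sum_range_succ'] at hpad
  have hmid : ∑ j ∈ Finset.range n, |F (v (j + 1)) (v (j + 1 + 1))| =
      ∑ j ∈ Finset.range n, |F (u j) (u (j + 1))| :=
    Finset.sum_congr rfl fun j hj => by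
      have hjn := Finset.mem_range.1 hj
      simp only [v, if_neg (Nat.succ_ne_zero _), if_pos (by omega : j + 1 ≤ n + 1),
        if_pos (by omega : j + 1 + 1 ≤ n + 1), Nat.add_sub_cancel]
  linarith [abs_nonneg (F (v 0) (v (0 + 1))), abs_nonneg (F (v (n + 1)) (v (n + 1 + 1)))]

end IntervalVariation

def IsIndefiniteHKIntegral (f : ℝ → ℝ) (F : ℝ → ℝ → ℝ) (A B : ℝ) : Prop :=
  ∀ a b, A ≤ a → a ≤ b → b ≤ B → HasHKIntegral f a b (F a b)

def slopeDeviationSet (f : ℝ → ℝ) (F : ℝ → ℝ → ℝ) (A B c : ℝ) : Set ℝ :=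
  {x | ∀ ρ > 0, ∃ I : TaggedInterval, I.tag = x ∧ I.IsFine (fun _ => ρ) ∧ A ≤ I.left ∧
    I.right ≤ B ∧ 0 < I.length ∧ c * I.length ≤ |F I.left I.right - I.riemannTerm f|}

theorem slopeDeviationSet_anti {f : ℝ → ℝ} {F : ℝ → ℝ → ℝ} {A B c c' : ℝ} (hcc' : c ≤ c') :
    slopeDeviationSet f F A B c' ⊆ slopeDeviationSet f F A B c := by
  intro x hx ρ hρ
  obtain ⟨I, hIx, hI, hAI, hIB, hlen, hdev⟩ := hx ρ hρ
  exact ⟨I, hIx, hI, hAI, hIB, hlen, (mul_le_mul_of_nonneg_right hcc' hlen.le).trans hdev⟩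

namespace IsIndefiniteHKIntegral

open Finset

variable {f : ℝ → ℝ} {F : ℝ → ℝ → ℝ} {A B : ℝ} (hF : IsIndefiniteHKIntegral f F A B)
include hF

theorem add_adjacent {a b c : ℝ} (ha : A ≤ a) (hab : a ≤ b) (hbc : b ≤ c) (hc : c ≤ B) :
    F a c = F a b + F b c :=
  (hF a b ha hab (hbc.trans hc)).eq_add (hF b c (ha.trans hab) hbc hc)
    (hF a c ha (hab.trans hbc) hc) hab hbc

theorem exists_isFinePartition_abs_sub_sum_le {δ : ℝ → ℝ} (hδ : ∀ s, 0 < δ s) {η : ℝ}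
    (hη : 0 < η) (s : Finset TaggedInterval) (hfine : ∀ I ∈ s, I.IsFine δ)
    (hdisj : (s : Set TaggedInterval).PairwiseDisjoint interval) {a b : ℝ} (ha : A ≤ a)
    (hab : a ≤ b) (hb : b ≤ B) (hs : ∀ I ∈ s, a ≤ I.left ∧ I.right ≤ b) :
    ∃ L, IsFinePartition δ a b L ∧
      |riemannSum f L - (F a b + ∑ I ∈ s, (I.riemannTerm f - F I.left I.right))| ≤
        (s.card + 1) * η := by
  classical
  induction s using Finset.induction_on_min_value TaggedInterval.left generalizing a with
  | empty =>
    obtain ⟨L, hL, hclose⟩ := (hF a b ha hab hb).exists_isFinePartition_abs_sub_lt hab hδ hη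
    exact ⟨L, hL, by simpa using hclose.le⟩
  | insert I s hIs hmin ih =>
    -- `I` is the leftmost interval: cover `[a, I.left]` finely, then recurse on `[I.right, b]`.
    have hI := hfine I (mem_insert_self I s)
    obtain ⟨haI, hIb⟩ := hs I (mem_insert_self I s)
    have hright : ∀ J ∈ s, I.right ≤ J.left := by
      intro J hJ
      by_contra! hlt
      have hne : I ≠ J := fun h => hIs (h ▸ hJ)
      exact Set.disjoint_left.1 (hdisj (mem_insert_self I s) (mem_insert_of_mem hJ) hne)
        ⟨hmin J hJ, hlt.le⟩ ⟨le_rfl, (hfine J (mem_insert_of_mem hJ)).left_le_right⟩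
    have hbB : I.right ≤ B := hIb.trans hb
    obtain ⟨L₁, hL₁, h₁⟩ := (hF a I.left ha haI (hI.left_le_right.trans hbB)
      ).exists_isFinePartition_abs_sub_lt haI hδ hη
    obtain ⟨L₂, hL₂, h₂⟩ := ih (fun J hJ => hfine J (mem_insert_of_mem hJ))
      (hdisj.subset (subset_insert I s)) (ha.trans (haI.trans hI.left_le_right)) hIb
      (fun J hJ => ⟨hright J hJ, (hs J (mem_insert_of_mem hJ)).2⟩)
    refine ⟨L₁ ++ I :: L₂, hL₁.append (.cons hI hL₂), ?_⟩
    have hsplit : F a b = F a I.left + F I.left I.right + F I.right b := by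
      rw [hF.add_adjacent ha haI (hI.left_le_right.trans hIb) hb,
        hF.add_adjacent (ha.trans haI) hI.left_le_right hIb hb, add_assoc]
    rw [riemannSum_append, riemannSum_cons, sum_insert hIs, card_insert_of_notMem hIs, hsplit]
    calc _ = |(riemannSum f L₁ - F a I.left) +
          (riemannSum f L₂ - (F I.right b + ∑ J ∈ s, (J.riemannTerm f - F J.left J.right)))| := by
          ring_nf
      _ ≤ η + (s.card + 1) * η := (abs_add_le _ _).trans (add_le_add h₁.le h₂)
      _ = ((s.card + 1 : ℕ) + 1) * η := by push_cast; ring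

/-- Henstock's lemma. -/
theorem abs_sum_riemannTerm_sub_le (hAB : A ≤ B) {δ : ℝ → ℝ} (hδ : ∀ s, 0 < δ s) {ε : ℝ}
    (hε : ∀ L, IsFinePartition δ A B L → |riemannSum f L - F A B| < ε)
    (s : Finset TaggedInterval) (hfine : ∀ I ∈ s, I.IsFine δ)
    (hdisj : (s : Set TaggedInterval).PairwiseDisjoint interval)
    (hs : ∀ I ∈ s, A ≤ I.left ∧ I.right ≤ B) :
    |∑ I ∈ s, (I.riemannTerm f - F I.left I.right)| ≤ ε := by
  refine le_iff_forall_pos_lt_add.2 fun η hη => ?_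
  obtain ⟨L, hL, hclose⟩ := hF.exists_isFinePartition_abs_sub_sum_le hδ
    (η := η / (s.card + 1)) (by positivity) s hfine hdisj le_rfl hAB le_rfl hs
  rw [mul_div_cancel₀ _ (by positivity)] at hclose
  calc _ = |(riemannSum f L - F A B) -
        (riemannSum f L - (F A B + ∑ I ∈ s, (I.riemannTerm f - F I.left I.right)))| := by
        ring_nf
    _ ≤ _ := abs_sub _ _
    _ < ε + η := add_lt_add_of_lt_of_le (hε L hL) hclose

theorem sum_length_le (hAB : A ≤ B) {δ : ℝ → ℝ} (hδ : ∀ s, 0 < δ s) {ε : ℝ}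
    (hε : ∀ L, IsFinePartition δ A B L → |riemannSum f L - F A B| < ε) {c : ℝ} (hc : 0 < c)
    (s : Finset TaggedInterval) (hfine : ∀ I ∈ s, I.IsFine δ)
    (hdisj : (s : Set TaggedInterval).PairwiseDisjoint interval)
    (hs : ∀ I ∈ s, A ≤ I.left ∧ I.right ≤ B)
    (hdev : ∀ I ∈ s, c * I.length ≤ |F I.left I.right - I.riemannTerm f|) :
    ∑ I ∈ s, I.length ≤ 2 * ε / c := by
  have hsum : ∑ I ∈ s, |I.riemannTerm f - F I.left I.right| ≤ 2 * ε :=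
    Finset.sum_abs_le_two_mul_of_forall_subset fun t ht =>
      hF.abs_sum_riemannTerm_sub_le hAB hδ hε t (fun I hI => hfine I (ht hI)) (hdisj.subset ht)
        (fun I hI => hs I (ht hI))
  rw [le_div_iff₀' hc, mul_sum]
  refine (sum_le_sum fun I hI => ?_).trans hsum
  rw [abs_sub_comm]
  exact hdev I hI

theorem volume_slopeDeviationSet (hAB : A ≤ B) {c : ℝ} (hc : 0 < c) :
    volume (slopeDeviationSet f F A B c) = 0 := by
  refine le_antisymm (ENNReal.le_of_forall_pos_le_add fun η hη _ => ?_) (by positivity)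
  obtain ⟨δ, hδ, hε⟩ := (hF A B le_rfl hAB le_rfl).exists_gauge (by positivity : 0 < c * η / 2)
  let t : Set TaggedInterval := {I | I.IsFine δ ∧ A ≤ I.left ∧ I.right ≤ B ∧ 0 < I.length ∧
    c * I.length ≤ |F I.left I.right - I.riemannTerm f|}
  obtain ⟨U, hUt, hUc, hUd, hUcov⟩ := exists_disjoint_covering_ae (slopeDeviationSet f F A B c) t
    (fun I hI => ⟨hI.1.left_le_tag, hI.1.tag_le_right, hI.2.2.2.1⟩)
    (fun x hx ε hε => by
      obtain ⟨I, rfl, hI, hAI, hIB, hlen, hdev⟩ :=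
        hx (min (ε / 2) (δ x)) (lt_min (by positivity) (hδ x))
      refine ⟨I, ⟨hI.mono (min_le_right _ _), hAI, hIB, hlen, hdev⟩, ?_, rfl⟩
      have := hI.tag_sub_le_left
      have := hI.right_le_tag_add
      have := min_le_left (ε / 2) (δ I.tag)
      rw [length]
      linarith)
  calc volume (slopeDeviationSet f F A B c) ≤ volume (⋃ I ∈ U, interval I) :=
        measure_mono_ae (ae_le_set.2 hUcov)
    _ ≤ ENNReal.ofReal η := volume_biUnion_interval_le hUc (fun I hI => (hUt hI).2.2.2.1.le)
        fun J hJ => by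
          have hlen := hF.sum_length_le hAB hδ hε hc J (fun I hI => (hUt (hJ hI)).1)
            (hUd.subset hJ) (fun I hI => ⟨(hUt (hJ hI)).2.1, (hUt (hJ hI)).2.2.1⟩)
            (fun I hI => (hUt (hJ hI)).2.2.2.2)
          rwa [show 2 * (c * η / 2) / c = η by field_simp] at hlen
    _ = 0 + η := by simp

theorem hasDerivAt_of_forall_notMem_slopeDeviationSet {x : ℝ} (hx : x ∈ Ioo A B)
    (hgood : ∀ c > 0, x ∉ slopeDeviationSet f F A B c) : HasDerivAt (F A ·) (f x) x := by
  rw [hasDerivAt_iff_isLittleO, Asymptotics.isLittleO_iff]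
  intro c hc
  obtain ⟨ρ, hρ, hclose⟩ : ∃ ρ > 0, ∀ I : TaggedInterval, I.tag = x → I.IsFine (fun _ => ρ) →
      A ≤ I.left → I.right ≤ B → 0 < I.length →
        |F I.left I.right - I.riemannTerm f| < c * I.length := by
    simpa [slopeDeviationSet] using hgood c hc
  filter_upwards [Ioo_mem_nhds (sub_lt_self x hρ) (lt_add_of_pos_right x hρ),
    Ioo_mem_nhds hx.1 hx.2] with y hy hyAB
  rw [Real.norm_eq_abs, Real.norm_eq_abs, smul_eq_mul]
  rcases lt_trichotomy x y with hxy | rfl | hyx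
  · have h := hclose ⟨x, y, x⟩ rfl ⟨le_rfl, hxy.le, by linarith, hy.2.le⟩ hx.1.le hyAB.2.le
      (sub_pos.2 hxy)
    rw [hF.add_adjacent le_rfl hx.1.le hxy.le hyAB.2.le, abs_of_pos (sub_pos.2 hxy)]
    simpa [riemannTerm, length] using h.le
  · simp
  · have h := hclose ⟨y, x, x⟩ rfl ⟨hyx.le, le_rfl, hy.1.le, by linarith⟩ hyAB.1.le hx.2.le
      (sub_pos.2 hyx)
    simp only [riemannTerm, length] at h
    rw [hF.add_adjacent le_rfl hyAB.1.le hyx.le hx.2.le, abs_of_neg (sub_neg.2 hyx),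
      show F A y - (F A y + F y x) - (y - x) * f x = -(F y x - (x - y) * f x) by ring, abs_neg]
    linarith

theorem ae_hasDerivAt (hAB : A ≤ B) : ∀ᵐ x, x ∈ Ioo A B → HasDerivAt (F A ·) (f x) x := by
  have hnull : ∀ᵐ x, ∀ k : ℕ, x ∉ slopeDeviationSet f F A B (1 / (k + 1)) :=
    ae_all_iff.2 fun k => measure_eq_zero_iff_ae_notMem.1
      (hF.volume_slopeDeviationSet hAB (by positivity))
  filter_upwards [hnull] with x hx hxAB
  refine hF.hasDerivAt_of_forall_notMem_slopeDeviationSet hxAB fun c hc hxc => ?_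
  obtain ⟨k, hk⟩ := exists_nat_one_div_lt hc
  exact hx k (slopeDeviationSet_anti hk.le hxc)

theorem boundedVariationOn
    (hvar : ∃ M : ℝ, ∀ (n : ℕ) (x : Fin (n + 1) → ℝ), IsIntervalPartition n A B x →
      (∑ i : Fin n, |F (x i.castSucc) (x i.succ)|) ≤ M) :
    BoundedVariationOn (F A ·) (Icc A B) := by
  obtain ⟨M, hM⟩ := hvar
  refine ne_top_of_le_ne_top (ENNReal.ofReal_ne_top (r := M)) (iSup_le fun ⟨n, u, hu, huAB⟩ => ?_)
  calc ∑ i ∈ Finset.range n, edist (F A (u (i + 1))) (F A (u i))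
      = ENNReal.ofReal (∑ i ∈ Finset.range n, |F (u i) (u (i + 1))|) := by
        rw [ENNReal.ofReal_sum_of_nonneg fun i _ => abs_nonneg _]
        refine Finset.sum_congr rfl fun i _ => ?_
        rw [edist_dist, Real.dist_eq, hF.add_adjacent le_rfl (huAB i).1 (hu i.le_succ)
          (huAB (i + 1)).2, add_sub_cancel_left]
    _ ≤ ENNReal.ofReal M := ENNReal.ofReal_le_ofReal (sum_abs_le_of_monotone hM hu huAB n)

end IsIndefiniteHKIntegral

/-- If `f` is Henstock–Kurzweil integrable on `[0,1]` and the interval variation of its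
indefinite integral `F` is finite, then `f` is Lebesgue integrable on `[0,1]`. -/
theorem lebesgue_integrable_of_HK_finite_interval_variation
    (f : ℝ → ℝ) (F : ℝ → ℝ → ℝ)
    (hF : ∀ a b : ℝ, 0 ≤ a → a ≤ b → b ≤ 1 → HasHKIntegral f a b (F a b))
    (hvar : ∃ M : ℝ, ∀ (n : ℕ) (x : Fin (n + 1) → ℝ), IsIntervalPartition n 0 1 x →
      (∑ i : Fin n, |F (x i.castSucc) (x i.succ)|) ≤ M) :
    IntegrableOn f (Set.Icc (0 : ℝ) 1) volume := by
  have hF : IsIndefiniteHKIntegral f F 0 1 := hF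
  have hderiv : IntegrableOn (deriv (F 0 ·)) (Ioo 0 1) :=
    (intervalIntegrable_iff_integrableOn_Ioo_of_le zero_le_one).1
      (BoundedVariationOn.intervalIntegrable_deriv (by
        simpa [uIcc_of_le zero_le_one] using hF.boundedVariationOn hvar))
  rw [integrableOn_Icc_iff_integrableOn_Ioo]
  refine hderiv.congr_fun_ae ?_
  filter_upwards [ae_restrict_mem measurableSet_Ioo,
    ae_restrict_of_ae (hF.ae_hasDerivAt zero_le_one)] with x hx hxderiv
  exact (hxderiv hx).deriv
end

section
/- Let X be a Banach space and f : [0,1] → X be strongly measurable and Pettis integrable, with indefinite Pettis integral ν(A) = (P)∫_A f dλ for A Lebesgue measurable. If ν has finite variation |ν|([0,1]) < ∞, then f is Bochner integrable. -/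
/-!
Since `f` is strongly measurable, its range is separable, so there are functionals `φ k` of
norm at most one with `‖f s‖ ≤ φ k (f s) + 1` on measurable sets `S k` covering the line. On the
pieces `E k` of `[0,1]` cut out by disjointing the `S k`, Pettis integrability gives
`∫_{E k} ‖f‖ ≤ φ k (ν (E k)) + λ (E k) ≤ ‖ν (E k)‖ + λ (E k)`, and summing over `k` bounds
`∫_{[0,1]} ‖f‖` by the variation of `ν` plus one.
-/

open Set MeasureTheory
open scoped ENNReal

theorem TopologicalSpace.IsSeparable.exists_seq_dual_norming {X : Type*} [NormedAddCommGroup X]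
    [NormedSpace ℝ X] {t : Set X} (ht : TopologicalSpace.IsSeparable t) {ε : ℝ} (hε : 0 < ε) :
    ∃ φ : ℕ → StrongDual ℝ X, (∀ k, ‖φ k‖ ≤ 1) ∧ ∀ x ∈ t, ∃ k, ‖x‖ - ε < φ k x := by
  obtain ⟨c, hc, htc⟩ := ht
  -- inserting `0` makes the countable set nonempty, so that it is the range of a sequence
  obtain ⟨u, hu⟩ := (hc.insert 0).exists_eq_range (insert_nonempty 0 c)
  choose φ hφ_norm hφ_eq using fun k => exists_dual_vector'' ℝ (u k)
  refine ⟨φ, hφ_norm, fun x hx => ?_⟩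
  have hx' : x ∈ closure (range u) := hu ▸ closure_mono (subset_insert 0 c) (htc hx)
  obtain ⟨_, ⟨k, rfl⟩, hxu⟩ := Metric.mem_closure_iff.1 hx' (ε / 2) (half_pos hε)
  rw [dist_eq_norm] at hxu
  have h_tri : ‖x‖ ≤ ‖u k‖ + ‖x - u k‖ := norm_le_norm_add_norm_sub' x (u k)
  have h_dual : |φ k (x - u k)| ≤ ‖x - u k‖ := by
    simpa using (φ k).le_of_opNorm_le (hφ_norm k) (x - u k)
  have h_split : φ k x = ‖u k‖ + φ k (x - u k) := by
    rw [map_sub, hφ_eq k, RCLike.ofReal_real_eq_id, id]; ring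
  refine ⟨k, ?_⟩
  linarith [neg_abs_le (φ k (x - u k))]

section

variable {α : Type*} [MeasurableSpace α] {μ : Measure α}

theorem setLIntegral_ofReal_le_of_le_add {E : Set α} {g h : α → ℝ} {c : ℝ}
    (hE : MeasurableSet E) (hμE : μ E ≠ ∞) (hg : IntegrableOn g E μ)
    (h_nonneg : ∀ s ∈ E, 0 ≤ h s) (h_le : ∀ s ∈ E, h s ≤ g s + c) :
    ∫⁻ s in E, ENNReal.ofReal (h s) ∂μ ≤
      ENNReal.ofReal (∫ s in E, g s ∂μ) + ENNReal.ofReal c * μ E := by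
  have hgc : IntegrableOn (fun s => g s + c) E μ := hg.add (integrableOn_const hμE)
  have hgc_nonneg : 0 ≤ᵐ[μ.restrict E] fun s => g s + c :=
    ae_restrict_of_forall_mem hE fun s hs => (h_nonneg s hs).trans (h_le s hs)
  calc ∫⁻ s in E, ENNReal.ofReal (h s) ∂μ
      ≤ ∫⁻ s in E, ENNReal.ofReal (g s + c) ∂μ :=
        lintegral_mono_ae <| ae_restrict_of_forall_mem hE fun s hs =>
          ENNReal.ofReal_le_ofReal (h_le s hs)
    _ = ENNReal.ofReal (∫ s in E, g s ∂μ + c * μ.real E) := by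
        rw [← ofReal_integral_eq_lintegral_ofReal hgc hgc_nonneg,
          integral_add hg (integrableOn_const hμE), setIntegral_const, smul_eq_mul, mul_comm]
    _ ≤ ENNReal.ofReal (∫ s in E, g s ∂μ) + ENNReal.ofReal c * μ E := by
        rw [← ofReal_measureReal hμE, ← ENNReal.ofReal_mul' measureReal_nonneg]
        exact ENNReal.ofReal_add_le

variable {X : Type*} [NormedAddCommGroup X]

def VariationLE (ν : Set α → X) (M : ℝ) : Prop :=
  ∀ (n : ℕ) (A : Fin n → Set α), (∀ i, MeasurableSet (A i)) →
    Pairwise (Function.onFun Disjoint A) → ∑ i, ‖ν (A i)‖ ≤ M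

theorem VariationLE.tsum_enorm_le {ν : Set α → X} {M : ℝ} (hν : VariationLE ν M)
    {E : ℕ → Set α} (hE : ∀ k, MeasurableSet (E k))
    (hdisj : Pairwise (Function.onFun Disjoint E)) :
    ∑' k, ‖ν (E k)‖ₑ ≤ ENNReal.ofReal M := by
  refine ENNReal.tsum_le_of_sum_range_le fun n => ?_
  have h := hν n (fun i => E i) (fun i => hE i) fun i j hij => hdisj (Fin.val_injective.ne hij)
  rw [Fin.sum_univ_eq_sum_range (fun k => ‖ν (E k)‖)] at h
  simp_rw [← ofReal_norm]
  rw [← ENNReal.ofReal_sum_of_nonneg fun _ _ => norm_nonneg _]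
  exact ENNReal.ofReal_le_ofReal h

variable [NormedSpace ℝ X]

theorem setLIntegral_enorm_le_of_dual {f : α → X} {E : Set α} {x : X}
    {φ : StrongDual ℝ X} {c : ℝ} (hE : MeasurableSet E) (hμE : μ E ≠ ∞) (hφ : ‖φ‖ ≤ 1)
    (hφf : IntegrableOn (fun s => φ (f s)) E μ) (hx : φ x = ∫ s in E, φ (f s) ∂μ)
    (hf : ∀ s ∈ E, ‖f s‖ ≤ φ (f s) + c) :
    ∫⁻ s in E, ‖f s‖ₑ ∂μ ≤ ‖x‖ₑ + ENNReal.ofReal c * μ E := by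
  have hφx : φ x ≤ ‖x‖ := by
    simpa using (le_abs_self _).trans (φ.le_of_opNorm_le hφ x)
  simp_rw [← ofReal_norm]
  calc ∫⁻ s in E, ENNReal.ofReal ‖f s‖ ∂μ
      ≤ ENNReal.ofReal (∫ s in E, φ (f s) ∂μ) + ENNReal.ofReal c * μ E :=
        setLIntegral_ofReal_le_of_le_add hE hμE hφf (fun s _ => norm_nonneg _) hf
    _ ≤ ENNReal.ofReal ‖x‖ + ENNReal.ofReal c * μ E := by
        rw [← hx]; gcongr

def HasIndefinitePettisIntegralOn (f : α → X) (ν : Set α → X) (T : Set α) (μ : Measure α) :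
    Prop :=
  ∀ φ : StrongDual ℝ X, IntegrableOn (fun s => φ (f s)) T μ ∧
    ∀ A : Set α, MeasurableSet A → φ (ν A) = ∫ s in A ∩ T, φ (f s) ∂μ

theorem HasIndefinitePettisIntegralOn.integrableOn {f : α → X} {ν : Set α → X} {T : Set α}
    (hf : StronglyMeasurable f) (hT : MeasurableSet T) (hμT : μ T ≠ ∞)
    (hfν : HasIndefinitePettisIntegralOn f ν T μ) {M : ℝ} (hν : VariationLE ν M) :
    IntegrableOn f T μ := by
  obtain ⟨φ, hφ_norm, hφ⟩ := hf.isSeparable_range.exists_seq_dual_norming one_pos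
  set S : ℕ → Set α := fun k => {s | ‖f s‖ ≤ φ k (f s) + 1}
  have hS_meas : ∀ k, MeasurableSet (S k) := fun k =>
    measurableSet_le hf.norm.measurable
      (((φ k).continuous.comp_stronglyMeasurable hf).measurable.add_const 1)
  have hS_cover : ⋃ k, S k = univ := eq_univ_of_forall fun s => by
    obtain ⟨k, hk⟩ := hφ _ (mem_range_self s)
    exact mem_iUnion.2 ⟨k, (by linarith : ‖f s‖ ≤ φ k (f s) + 1)⟩
  set E : ℕ → Set α := fun k => T ∩ disjointed S k
  have hE_meas : ∀ k, MeasurableSet (E k) := fun k => hT.inter (.disjointed hS_meas k)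
  have hE_disj : Pairwise (Function.onFun Disjoint E) := fun i j hij =>
    ((disjoint_disjointed S) hij).mono inter_subset_right inter_subset_right
  have hE_union : ⋃ k, E k = T := by
    simp only [E, ← inter_iUnion, iUnion_disjointed, hS_cover, inter_univ]
  have hE_bound : ∀ k, ∫⁻ s in E k, ‖f s‖ₑ ∂μ ≤ ‖ν (E k)‖ₑ + μ (E k) := fun k => by
    have hET : E k ⊆ T := inter_subset_left
    have hν_eq := (hfν (φ k)).2 (E k) (hE_meas k)
    rw [inter_eq_left.2 hET] at hν_eq
    simpa using setLIntegral_enorm_le_of_dual (hE_meas k)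
      (measure_ne_top_of_subset hET hμT) (hφ_norm k) ((hfν (φ k)).1.mono_set hET) hν_eq
      fun s hs => (inter_subset_right.trans (disjointed_subset S k) hs : s ∈ S k)
  refine ⟨hf.aestronglyMeasurable.restrict, hasFiniteIntegral_iff_enorm.2 ?_⟩
  calc ∫⁻ s in T, ‖f s‖ₑ ∂μ
      = ∑' k, ∫⁻ s in E k, ‖f s‖ₑ ∂μ := by rw [← hE_union, lintegral_iUnion hE_meas hE_disj]
    _ ≤ ∑' k, (‖ν (E k)‖ₑ + μ (E k)) := ENNReal.tsum_le_tsum hE_bound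
    _ = ∑' k, ‖ν (E k)‖ₑ + μ T := by
        rw [ENNReal.tsum_add, ← measure_iUnion hE_disj hE_meas, hE_union]
    _ ≤ ENNReal.ofReal M + μ T := by gcongr; exact hν.tsum_enorm_le hE_meas hE_disj
    _ < ∞ := ENNReal.add_lt_top.2 ⟨ENNReal.ofReal_lt_top, hμT.lt_top⟩

end

theorem bochner_integrable_of_pettis_finite_variation_general
    {X : Type*} [NormedAddCommGroup X] [NormedSpace ℝ X]
    (f : ℝ → X) (hf : StronglyMeasurable f)
    (ν : Set ℝ → X)
    -- Pettis integrability of `f` on `[0,1]` with indefinite integral `ν`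
    (hPettis : ∀ φ : StrongDual ℝ X,
      IntegrableOn (fun s => φ (f s)) (Set.Icc (0 : ℝ) 1) volume ∧
      ∀ A : Set ℝ, MeasurableSet A →
        φ (ν A) = ∫ s in A ∩ Set.Icc (0 : ℝ) 1, φ (f s) ∂volume)
    -- finite variation of `ν`
    (M : ℝ)
    (hM : ∀ (n : ℕ) (A : Fin n → Set ℝ), (∀ i, MeasurableSet (A i)) →
      Pairwise (Function.onFun Disjoint A) → (∑ i, ‖ν (A i)‖) ≤ M) :
    IntegrableOn f (Set.Icc (0 : ℝ) 1) volume :=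
  HasIndefinitePettisIntegralOn.integrableOn hf measurableSet_Icc measure_Icc_lt_top.ne
    hPettis hM

/-- A strongly measurable, Pettis integrable function `f : [0,1] → X` whose indefinite
Pettis integral `ν` has finite variation is Bochner integrable. -/
theorem bochner_integrable_of_pettis_finite_variation
    {X : Type*} [NormedAddCommGroup X] [NormedSpace ℝ X] [CompleteSpace X]
    (f : ℝ → X) (hf : StronglyMeasurable f)
    (ν : Set ℝ → X)
    -- Pettis integrability of `f` on `[0,1]` with indefinite integral `ν`
    (hPettis : ∀ φ : StrongDual ℝ X,
      IntegrableOn (fun s => φ (f s)) (Set.Icc (0 : ℝ) 1) volume ∧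
      ∀ A : Set ℝ, MeasurableSet A →
        φ (ν A) = ∫ s in A ∩ Set.Icc (0 : ℝ) 1, φ (f s) ∂volume)
    -- finite variation of `ν`
    (M : ℝ)
    (hM : ∀ (n : ℕ) (A : Fin n → Set ℝ), (∀ i, MeasurableSet (A i)) →
      Pairwise (Function.onFun Disjoint A) → (∑ i, ‖ν (A i)‖) ≤ M) :
    IntegrableOn f (Set.Icc (0 : ℝ) 1) volume :=
  bochner_integrable_of_pettis_finite_variation_general f hf ν hPettis M hM
end

section
/- Let Y be a Banach space, f : [0,1] → Y strongly measurable, and suppose the indefinite Pettis integral of f exists and has finite variation. If moreover f is McShane integrable with McShane integral coinciding with the Pettis integral on intervals, then f is variationally McShane integrable: for every ε > 0 there is a gauge δ such that ∑ᵢ ‖ν(Iᵢ) − f(tᵢ)λ(Iᵢ)‖ < ε for every δ-fine tagged partition {(Iᵢ,tᵢ)} of [0,1] (tags not required to lie in their intervals). -/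
open Set MeasureTheory

/-- McShane tagging: tags lie in `[0,1]` but need not belong to their intervals. -/
def IsMcShaneTagged (n : ℕ) (t : Fin n → ℝ) : Prop :=
  ∀ i : Fin n, t i ∈ Set.Icc (0 : ℝ) 1

/-- `δ`-fineness (McShane): `Iᵢ ⊆ (tᵢ - δ(tᵢ), tᵢ + δ(tᵢ))`. -/
def IsMcShaneFine (δ : ℝ → ℝ) (n : ℕ) (x : Fin (n + 1) → ℝ) (t : Fin n → ℝ) : Prop :=
  ∀ i : Fin n, Set.Icc (x i.castSucc) (x i.succ) ⊆ Set.Ioo (t i - δ (t i)) (t i + δ (t i))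

/-- McShane integrability of `f` on `[a,b]` with integral `I`. -/
def HasMcShaneIntegral {Y : Type*} [NormedAddCommGroup Y] [NormedSpace ℝ Y]
    (f : ℝ → Y) (a b : ℝ) (I : Y) : Prop :=
  ∀ ε > (0 : ℝ), ∃ δ : ℝ → ℝ, (∀ s, 0 < δ s) ∧
    ∀ (n : ℕ) (x : Fin (n + 1) → ℝ) (t : Fin n → ℝ),
      IsIntervalPartition n a b x → IsMcShaneTagged n t → IsMcShaneFine δ n x t →
      ‖(∑ i : Fin n, (x i.succ - x i.castSucc) • f (t i)) - I‖ < ε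

/-!
Finite variation of the Pettis integral forces `∫ ‖f‖ ≤ M`: the separable range of `f` has a
countable norming family `(φ m)`, so `‖f‖ = ⨆ m, φ m ∘ f`, and the integral of
`max_{m < n} (φ m ∘ f)⁺` equals `∑ m, φ m (ν (C m))` for disjoint sets `C m`, which is at most
`M`. Hence `f` is Bochner integrable, and by duality each term of the Riemann sum is bounded by
`∫_{Iᵢ} ‖f s - f tᵢ‖ ds`. The sum of these is small for fine partitions (Henstock's lemma):
approximate `f` in `L¹` by a compactly supported continuous `g`, control `g` by uniform
continuity, and control the tag values `‖f tᵢ - g tᵢ‖ |Iᵢ|` by a lower semicontinuous majorant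
of `‖f - g‖` with almost the same integral (Vitali–Carathéodory), which still dominates
`‖f t - g t‖` on a neighbourhood of `t`.
-/

open scoped ENNReal NNReal

theorem IsIntervalPartition.Icc_subset {n : ℕ} {a b : ℝ} {x : Fin (n + 1) → ℝ}
    (hx : IsIntervalPartition n a b x) (i : Fin n) :
    Icc (x i.castSucc) (x i.succ) ⊆ Icc a b :=
  Icc_subset_Icc (hx.2.1 ▸ hx.1 (Fin.zero_le _)) (hx.2.2 ▸ hx.1 (Fin.le_last _))

theorem IsIntervalPartition.sum_setLIntegral_le {μ : Measure ℝ} [NullSingletonClass μ] {n : ℕ}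
    {a b : ℝ} {x : Fin (n + 1) → ℝ} (hx : IsIntervalPartition n a b x) (h : ℝ → ℝ≥0∞) :
    ∑ i : Fin n, ∫⁻ s in Icc (x i.castSucc) (x i.succ), h s ∂μ ≤ ∫⁻ s in Icc a b, h s ∂μ := by
  have hdisj : ∀ i j : Fin n, i < j →
      AEDisjoint μ (Icc (x i.castSucc) (x i.succ)) (Icc (x j.castSucc) (x j.succ)) := by
    intro i j hij
    refine measure_mono_null (fun s hs => ?_) (measure_singleton (x i.succ))
    exact le_antisymm hs.1.2 ((hx.1 (Fin.succ_le_castSucc_iff.2 hij)).trans hs.2.1)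
  rw [← tsum_fintype (L := .unconditional _),
    ← lintegral_iUnion₀ (fun _ => measurableSet_Icc.nullMeasurableSet)
      fun i j hij => hij.lt_or_gt.elim (hdisj i j) fun h => (hdisj j i h).symm]
  exact lintegral_mono_set (iUnion_subset hx.Icc_subset)

theorem IsMcShaneFine.mono {δ δ' : ℝ → ℝ} {n : ℕ} {x : Fin (n + 1) → ℝ} {t : Fin n → ℝ}
    (hfine : IsMcShaneFine δ n x t) (hδ : ∀ s, δ s ≤ δ' s) : IsMcShaneFine δ' n x t :=
  fun i => (hfine i).trans <| Ioo_subset_Ioo (by linarith [hδ (t i)]) (by linarith [hδ (t i)])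

theorem exists_gauge_sum_mul_le_lintegral_add {a b : ℝ} {u : ℝ → ℝ≥0} (hu : Measurable u)
    {η : ℝ≥0∞} (hη : η ≠ 0) :
    ∃ δ : ℝ → ℝ, (∀ s, 0 < δ s) ∧
      ∀ (n : ℕ) (x : Fin (n + 1) → ℝ) (t : Fin n → ℝ),
        IsIntervalPartition n a b x → IsMcShaneFine δ n x t →
        ∑ i : Fin n, volume (Icc (x i.castSucc) (x i.succ)) * u (t i) ≤
          (∫⁻ s in Icc a b, u s) + η := by
  have := Measure.Regular.restrict_of_measure_ne_top (μ := (volume : Measure ℝ))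
    (A := Icc a b) measure_Icc_lt_top.ne
  obtain ⟨G, hlt, hG, hGint⟩ :=
    exists_lt_lowerSemicontinuous_lintegral_ge (volume.restrict (Icc a b)) u hu hη
  have hgauge : ∀ s, ∃ r > 0, ∀ z ∈ Ioo (s - r) (s + r), (u s : ℝ≥0∞) < G z := fun s => by
    simpa only [← Real.ball_eq_Ioo] using Metric.eventually_nhds_iff_ball.1 (hG s _ (hlt s))
  choose δ hδ hδG using hgauge
  refine ⟨δ, hδ, fun n x t hx hfine => ?_⟩
  calc ∑ i : Fin n, volume (Icc (x i.castSucc) (x i.succ)) * u (t i)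
      = ∑ i : Fin n, ∫⁻ _ in Icc (x i.castSucc) (x i.succ), (u (t i) : ℝ≥0∞) := by
        simp only [setLIntegral_const, mul_comm]
    _ ≤ ∑ i : Fin n, ∫⁻ s in Icc (x i.castSucc) (x i.succ), G s :=
        Finset.sum_le_sum fun i _ =>
          setLIntegral_mono' measurableSet_Icc fun z hz => (hδG _ _ (hfine i hz)).le
    _ ≤ ∫⁻ s in Icc a b, G s := hx.sum_setLIntegral_le G
    _ ≤ (∫⁻ s in Icc a b, u s) + η := hGint

section

variable {Y : Type*} [NormedAddCommGroup Y]

theorem setLIntegral_enorm_sub_le {α : Type*} [MeasurableSpace α] {μ : Measure α}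
    {f g : α → Y} (hfg : Measurable fun s => ‖f s - g s‖ₑ) {I : Set α} (hI : MeasurableSet I)
    {t : α} {η : ℝ≥0∞} (hg : ∀ s ∈ I, ‖g s - g t‖ₑ ≤ η) :
    ∫⁻ s in I, ‖f s - f t‖ₑ ∂μ ≤
      (∫⁻ s in I, ‖f s - g s‖ₑ ∂μ) + (∫⁻ _ in I, η ∂μ) + μ I * ‖f t - g t‖ₑ :=
  calc ∫⁻ s in I, ‖f s - f t‖ₑ ∂μ
      ≤ ∫⁻ s in I, (‖f s - g s‖ₑ + η + ‖f t - g t‖ₑ) ∂μ := by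
        refine setLIntegral_mono' hI fun s hs => ?_
        simp only [← edist_eq_enorm_sub]
        grw [edist_triangle4 (f s) (g s) (g t) (f t), edist_eq_enorm_sub (g s), hg s hs,
          edist_comm (g t)]
    _ = _ := by
        rw [lintegral_add_right _ measurable_const, lintegral_add_left hfg,
          setLIntegral_const _ ‖f t - g t‖ₑ, mul_comm]

variable [NormedSpace ℝ Y]

theorem exists_gauge_sum_lintegral_enorm_sub_le {f : ℝ → Y} (hf : StronglyMeasurable f)
    (hfi : IntegrableOn f (Icc 0 1)) {ε : ℝ} (hε : 0 < ε) :
    ∃ δ : ℝ → ℝ, (∀ s, 0 < δ s) ∧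
      ∀ (n : ℕ) (x : Fin (n + 1) → ℝ) (t : Fin n → ℝ),
        IsIntervalPartition n 0 1 x → IsMcShaneFine δ n x t →
        ∑ i : Fin n, ∫⁻ s in Icc (x i.castSucc) (x i.succ), ‖f s - f (t i)‖ₑ ≤
          ENNReal.ofReal ε := by
  set η := ENNReal.ofReal (ε / 4)
  have hη : η ≠ 0 := (ENNReal.ofReal_pos.2 (by positivity)).ne'
  have := Measure.Regular.restrict_of_measure_ne_top (μ := (volume : Measure ℝ))
    (A := Icc 0 1) measure_Icc_lt_top.ne
  obtain ⟨g, hg_supp, hfg, hg, -⟩ := hfi.exists_hasCompactSupport_lintegral_sub_le hη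
  obtain ⟨δ₁, hδ₁, hg_unif⟩ :=
    Metric.uniformContinuous_iff.1 (hg_supp.uniformContinuous_of_continuous hg) (ε / 4)
      (by positivity)
  obtain ⟨δ₂, hδ₂, hsum₂⟩ := exists_gauge_sum_mul_le_lintegral_add (a := 0) (b := 1)
    (u := fun s => ‖f s - g s‖₊) (hf.sub hg.stronglyMeasurable).nnnorm.measurable hη
  refine ⟨fun s => min δ₁ (δ₂ s), fun s => lt_min hδ₁ (hδ₂ s), fun n x t hx hfine => ?_⟩
  have hclose : ∀ i, ∀ s ∈ Icc (x i.castSucc) (x i.succ), ‖g s - g (t i)‖ₑ ≤ η := by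
    intro i s hs
    have hst := hfine i hs
    rw [← edist_eq_enorm_sub]
    refine (edist_lt_ofReal.2 (hg_unif ?_)).le
    rw [Real.dist_eq, abs_lt]
    constructor <;> linarith [hst.1, hst.2, min_le_left δ₁ (δ₂ (t i))]
  have hsplit := fun i => setLIntegral_enorm_sub_le (μ := volume)
    (hf.sub hg.stronglyMeasurable).enorm measurableSet_Icc (hclose i)
  calc ∑ i : Fin n, ∫⁻ s in Icc (x i.castSucc) (x i.succ), ‖f s - f (t i)‖ₑ
      ≤ ∑ i : Fin n, ((∫⁻ s in Icc (x i.castSucc) (x i.succ), ‖f s - g s‖ₑ) +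
        (∫⁻ _ in Icc (x i.castSucc) (x i.succ), η) +
        volume (Icc (x i.castSucc) (x i.succ)) * ‖f (t i) - g (t i)‖ₑ) :=
        Finset.sum_le_sum fun i _ => hsplit i
    _ = (∑ i : Fin n, ∫⁻ s in Icc (x i.castSucc) (x i.succ), ‖f s - g s‖ₑ) +
        (∑ i : Fin n, ∫⁻ _ in Icc (x i.castSucc) (x i.succ), η) +
        ∑ i : Fin n, volume (Icc (x i.castSucc) (x i.succ)) * ‖f (t i) - g (t i)‖ₑ := by
        rw [Finset.sum_add_distrib, Finset.sum_add_distrib]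
    _ ≤ η + η + (η + η) := by
        gcongr
        · exact (hx.sum_setLIntegral_le _).trans hfg
        · exact (hx.sum_setLIntegral_le _).trans_eq (by simp)
        · exact (hsum₂ n x t hx (hfine.mono fun s => min_le_right _ _)).trans
            (add_le_add_left hfg η)
    _ = ENNReal.ofReal ε := by
        have h4 : 0 ≤ ε / 4 := by positivity
        rw [← ENNReal.ofReal_add h4 h4, ← ENNReal.ofReal_add (by positivity) (by positivity)]
        ring_nf

theorem Finset.measurable_fun_sup {ι δ α : Type*} [MeasurableSpace δ] [MeasurableSpace α]
    [SemilatticeSup α] [OrderBot α] [MeasurableSup₂ α] {s : Finset ι} {f : ι → δ → α}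
    (hf : ∀ i ∈ s, Measurable (f i)) : Measurable fun x => s.sup fun i => f i x := by
  have h : Measurable (s.sup f) :=
    Finset.sup_induction (p := Measurable) measurable_const (fun _ h₁ _ h₂ => h₁.sup h₂) hf
  convert h using 1
  ext x
  rw [Finset.sup_apply]

theorem lintegral_finset_sup_ofReal_le {α : Type*} [MeasurableSpace α] {μ : Measure α}
    {g : ℕ → α → ℝ} (hg : ∀ m, Measurable (g m)) (hgi : ∀ m, Integrable (g m) μ)
    (s : Finset ℕ) {M : ℝ}
    (hM : ∀ C : ℕ → Set α, (∀ m, MeasurableSet (C m)) → Pairwise (Function.onFun Disjoint C) →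
      ∑ m ∈ s, ∫ x in C m, g m x ∂μ ≤ M) :
    ∫⁻ x, s.sup (fun m => ENNReal.ofReal (g m x)) ∂μ ≤ ENNReal.ofReal M := by
  set H : α → ℝ≥0∞ := fun x => s.sup fun m => ENNReal.ofReal (g m x)
  have hH : Measurable H := Finset.measurable_fun_sup fun m _ => (hg m).ennreal_ofReal
  set D : ℕ → Set α := fun m => {x | m ∈ s ∧ 0 ≤ g m x ∧ H x = ENNReal.ofReal (g m x)}
  have hD : ∀ m, MeasurableSet (D m) := fun m =>
    (MeasurableSet.const _).inter <| (measurableSet_le measurable_const (hg m)).inter <|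
      measurableSet_eq_fun hH (hg m).ennreal_ofReal
  set C := disjointed D
  have hC : ∀ m, MeasurableSet (C m) := MeasurableSet.disjointed hD
  have hsupp : Function.support H ⊆ ⋃ m, C m := by
    intro x hx
    rw [iUnion_disjointed]
    have hs : s.Nonempty := Finset.nonempty_iff_ne_empty.2 fun h => hx (by simp [H, h])
    obtain ⟨m, hm, hHm⟩ := s.exists_mem_eq_sup hs fun m => ENNReal.ofReal (g m x)
    refine mem_iUnion.2 ⟨m, hm, ?_, hHm⟩
    by_contra hneg
    exact hx (hHm.trans (ENNReal.ofReal_eq_zero.2 (not_le.1 hneg).le))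
  have hCs : ∀ m ∉ s, C m = ∅ := fun m hm =>
    subset_empty_iff.1 fun x hx => hm (disjointed_subset D m hx).1
  have hterm : ∀ m ∈ s, ∫⁻ x in C m, H x ∂μ = ENNReal.ofReal (∫ x in C m, g m x ∂μ) := by
    intro m _
    rw [setLIntegral_congr_fun (hC m) fun x hx => (disjointed_subset D m hx).2.2,
      ofReal_integral_eq_lintegral_ofReal (hgi m).integrableOn
        (ae_restrict_of_forall_mem (hC m) fun x hx => (disjointed_subset D m hx).2.1)]
  calc ∫⁻ x, H x ∂μ = ∫⁻ x in ⋃ m, C m, H x ∂μ := (setLIntegral_eq_of_support_subset hsupp).symm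
    _ = ∑' m, ∫⁻ x in C m, H x ∂μ := lintegral_iUnion hC (disjoint_disjointed D) H
    _ = ∑ m ∈ s, ∫⁻ x in C m, H x ∂μ := tsum_eq_sum fun m hm => by
        rw [hCs m hm, Measure.restrict_empty, lintegral_zero_measure]
    _ = ENNReal.ofReal (∑ m ∈ s, ∫ x in C m, g m x ∂μ) := by
        rw [Finset.sum_congr rfl hterm, ENNReal.ofReal_sum_of_nonneg fun m _ =>
          setIntegral_nonneg (hC m) fun x hx => (disjointed_subset D m hx).2.1]
    _ ≤ ENNReal.ofReal M := ENNReal.ofReal_le_ofReal (hM C hC (disjoint_disjointed D))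

theorem TopologicalSpace.IsSeparable.exists_dual_seq_enorm_eq_iSup {S : Set Y}
    (hS : IsSeparable S) :
    ∃ φ : ℕ → StrongDual ℝ Y, (∀ m, ‖φ m‖ ≤ 1) ∧
      ∀ y ∈ S, ‖y‖ₑ = ⨆ m, ENNReal.ofReal (φ m y) := by
  obtain ⟨c, hc, hSc⟩ := hS
  obtain ⟨z, hz⟩ := (hc.insert 0).exists_eq_range (insert_nonempty _ _)
  choose φ hφ1 hφ2 using fun m => exists_dual_vector'' ℝ (z m)
  refine ⟨φ, hφ1, fun y hy => le_antisymm ?_ (iSup_le fun m => ?_)⟩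
  · have hyz : y ∈ closure (range z) := hz ▸ closure_mono (subset_insert _ _) (hSc hy)
    refine ENNReal.le_of_forall_pos_le_add fun ε hε _ => ?_
    obtain ⟨_, ⟨m, rfl⟩, hm⟩ := Metric.mem_closure_iff.1 hyz (ε / 2) (by positivity)
    -- `φ m` norms `z m`, which is within `ε / 2` of `y`
    have hle : ‖y‖ ≤ φ m y + ε := by
      have h₁ := (le_abs_self _).trans ((φ m).le_of_opNorm_le (hφ1 m) (z m - y))
      have h₂ := norm_le_insert' y (z m)
      rw [map_sub, hφ2, RCLike.ofReal_real_eq_id, id, ← dist_eq_norm, dist_comm] at h₁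
      rw [← dist_eq_norm] at h₂
      linarith
    calc ‖y‖ₑ = ENNReal.ofReal ‖y‖ := (ofReal_norm y).symm
      _ ≤ ENNReal.ofReal (φ m y) + ε := by
          simpa using (ENNReal.ofReal_le_ofReal hle).trans ENNReal.ofReal_add_le
      _ ≤ (⨆ m, ENNReal.ofReal (φ m y)) + ε := by gcongr; exact le_iSup_of_le m le_rfl
  · rw [← ofReal_norm]
    exact ENNReal.ofReal_le_ofReal <| (le_abs_self _).trans <|
      ((φ m).le_of_opNorm_le (hφ1 m) y).trans_eq (one_mul _)

theorem enorm_le_lintegral_enorm_of_forall_dual {α : Type*} [MeasurableSpace α] {μ : Measure α}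
    {y : Y} {F : α → Y} (h : ∀ φ : StrongDual ℝ Y, φ y = ∫ x, φ (F x) ∂μ) :
    ‖y‖ₑ ≤ ∫⁻ x, ‖F x‖ₑ ∂μ := by
  rcases eq_top_or_lt_top (∫⁻ x, ‖F x‖ₑ ∂μ) with htop | hfin
  · simp [htop]
  have hφ : ∀ φ : StrongDual ℝ Y, ‖φ y‖ₑ ≤ ‖φ‖ₑ * ∫⁻ x, ‖F x‖ₑ ∂μ := fun φ =>
    calc ‖φ y‖ₑ = ‖∫ x, φ (F x) ∂μ‖ₑ := by rw [h φ]
      _ ≤ ∫⁻ x, ‖φ (F x)‖ₑ ∂μ := enorm_integral_le_lintegral_enorm _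
      _ ≤ ∫⁻ x, ‖φ‖ₑ * ‖F x‖ₑ ∂μ := lintegral_mono fun x => φ.le_opENorm (F x)
      _ = ‖φ‖ₑ * ∫⁻ x, ‖F x‖ₑ ∂μ := lintegral_const_mul' _ _ enorm_ne_top
  rw [← ofReal_norm, ← ENNReal.ofReal_toReal hfin.ne]
  refine ENNReal.ofReal_le_ofReal <|
    NormedSpace.norm_le_dual_bound ℝ y ENNReal.toReal_nonneg fun φ => ?_
  simpa [ENNReal.toReal_mul, mul_comm] using
    ENNReal.toReal_mono (ENNReal.mul_ne_top enorm_ne_top hfin.ne) (hφ φ)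

def IsIndefinitePettisIntegral {α : Type*} [MeasurableSpace α] (ν : Set α → Y) (f : α → Y)
    (μ : Measure α) : Prop :=
  ∀ φ : StrongDual ℝ Y, Integrable (fun x => φ (f x)) μ ∧
    ∀ A, MeasurableSet A → φ (ν A) = ∫ x in A, φ (f x) ∂μ

namespace IsIndefinitePettisIntegral

variable {α : Type*} [MeasurableSpace α] {μ : Measure α} {ν : Set α → Y} {f : α → Y}

theorem enorm_sub_smul_le (hν : IsIndefinitePettisIntegral ν f μ) {A : Set α}
    (hA : MeasurableSet A) (hμA : μ A ≠ ⊤) (y : Y) :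
    ‖ν A - μ.real A • y‖ₑ ≤ ∫⁻ x in A, ‖f x - y‖ₑ ∂μ := by
  refine enorm_le_lintegral_enorm_of_forall_dual fun φ => ?_
  simp only [map_sub, map_smul, smul_eq_mul]
  rw [integral_sub (hν φ).1.integrableOn (integrableOn_const hμA), setIntegral_const,
    (hν φ).2 A hA, smul_eq_mul]

theorem lintegral_enorm_le (hν : IsIndefinitePettisIntegral ν f μ) (hf : StronglyMeasurable f)
    {M : ℝ} (hM : ∀ (n : ℕ) (A : Fin n → Set α), (∀ i, MeasurableSet (A i)) →
      Pairwise (Function.onFun Disjoint A) → ∑ i, ‖ν (A i)‖ ≤ M) :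
    ∫⁻ x, ‖f x‖ₑ ∂μ ≤ ENNReal.ofReal M := by
  obtain ⟨φ, hφ1, hφ⟩ := hf.isSeparable_range.exists_dual_seq_enorm_eq_iSup
  set F : ℕ → α → ℝ≥0∞ := fun n x => (Finset.range n).sup fun m => ENNReal.ofReal (φ m (f x))
  have hφf : ∀ m, Measurable fun x => φ m (f x) := fun m =>
    ((φ m).continuous.comp_stronglyMeasurable hf).measurable
  have hF : ∀ x, ‖f x‖ₑ = ⨆ n, F n x := fun x => by
    rw [hφ _ (mem_range_self x)]
    exact le_antisymm
      (iSup_le fun m => le_iSup_of_le (m + 1) (Finset.le_sup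
        (f := fun m => ENNReal.ofReal (φ m (f x))) (Finset.self_mem_range_succ m)))
      (iSup_le fun n => Finset.sup_le fun m _ => le_iSup (fun m => ENNReal.ofReal (φ m (f x))) m)
  have hFM : ∀ n, ∫⁻ x, F n x ∂μ ≤ ENNReal.ofReal M := fun n =>
    lintegral_finset_sup_ofReal_le hφf (fun m => (hν (φ m)).1) _ fun C hC hCd =>
      calc ∑ m ∈ Finset.range n, ∫ x in C m, φ m (f x) ∂μ
          = ∑ m ∈ Finset.range n, φ m (ν (C m)) :=
            Finset.sum_congr rfl fun m _ => ((hν (φ m)).2 _ (hC m)).symm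
        _ ≤ ∑ m ∈ Finset.range n, ‖ν (C m)‖ := Finset.sum_le_sum fun m _ =>
            (le_abs_self _).trans (((φ m).le_of_opNorm_le (hφ1 m) _).trans_eq (one_mul _))
        _ = ∑ i : Fin n, ‖ν (C i)‖ := Finset.sum_range _
        _ ≤ M := hM n _ (fun i => hC i) (hCd.comp_of_injective Fin.val_injective)
  calc ∫⁻ x, ‖f x‖ₑ ∂μ = ∫⁻ x, ⨆ n, F n x ∂μ := lintegral_congr hF
    _ = ⨆ n, ∫⁻ x, F n x ∂μ :=
        lintegral_iSup (fun n => Finset.measurable_fun_sup fun m _ => (hφf m).ennreal_ofReal)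
          fun _ _ hn x => Finset.sup_mono (Finset.range_mono hn)
    _ ≤ ENNReal.ofReal M := iSup_le hFM

end IsIndefinitePettisIntegral

end

theorem variationally_mcshane_of_pettis_finite_variation_general
    {Y : Type*} [NormedAddCommGroup Y] [NormedSpace ℝ Y]
    (f : ℝ → Y) (hf : StronglyMeasurable f)
    (ν : Set ℝ → Y)
    -- `ν` is the indefinite Pettis integral of `f` on `[0,1]`
    (hPettis : ∀ φ : StrongDual ℝ Y,
      IntegrableOn (fun s => φ (f s)) (Set.Icc (0 : ℝ) 1) volume ∧
      ∀ A : Set ℝ, MeasurableSet A →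
        φ (ν A) = ∫ s in A ∩ Set.Icc (0 : ℝ) 1, φ (f s) ∂volume)
    -- `ν` has finite variation
    (M : ℝ)
    (hM : ∀ (n : ℕ) (A : Fin n → Set ℝ), (∀ i, MeasurableSet (A i)) →
      Pairwise (Function.onFun Disjoint A) → (∑ i, ‖ν (A i)‖) ≤ M) :
    -- variational McShane integrability
    ∀ ε > (0 : ℝ), ∃ δ : ℝ → ℝ, (∀ s, 0 < δ s) ∧
      ∀ (n : ℕ) (x : Fin (n + 1) → ℝ) (t : Fin n → ℝ),
        IsIntervalPartition n 0 1 x → IsMcShaneTagged n t → IsMcShaneFine δ n x t →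
        (∑ i : Fin n,
          ‖ν (Set.Icc (x i.castSucc) (x i.succ)) -
            (x i.succ - x i.castSucc) • f (t i)‖) < ε := by
  have hν : IsIndefinitePettisIntegral ν f (volume.restrict (Icc 0 1)) := fun φ =>
    ⟨(hPettis φ).1, fun A hA => by rw [Measure.restrict_restrict hA]; exact (hPettis φ).2 A hA⟩
  have hfi : IntegrableOn f (Icc 0 1) :=
    ⟨hf.aestronglyMeasurable, (hν.lintegral_enorm_le hf hM).trans_lt ENNReal.ofReal_lt_top⟩
  intro ε hε
  obtain ⟨δ, hδ, hsum⟩ := exists_gauge_sum_lintegral_enorm_sub_le hf hfi (half_pos hε)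
  refine ⟨δ, hδ, fun n x t hx _ hfine => ?_⟩
  have hterm : ∀ i : Fin n, ‖ν (Icc (x i.castSucc) (x i.succ)) -
      (x i.succ - x i.castSucc) • f (t i)‖ₑ ≤
        ∫⁻ s in Icc (x i.castSucc) (x i.succ), ‖f s - f (t i)‖ₑ := fun i => by
    have h := hν.enorm_sub_smul_le (A := Icc (x i.castSucc) (x i.succ)) measurableSet_Icc
      (measure_ne_top _ _) (f (t i))
    rwa [Measure.restrict_restrict_of_subset (hx.Icc_subset i), measureReal_restrict_apply
      measurableSet_Icc, inter_eq_left.2 (hx.Icc_subset i),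
      Real.volume_real_Icc_of_le (hx.1 i.castSucc_le_succ)] at h
  rw [← ENNReal.ofReal_lt_ofReal_iff hε, ENNReal.ofReal_sum_of_nonneg fun _ _ => norm_nonneg _]
  calc ∑ i : Fin n, ENNReal.ofReal ‖ν (Icc (x i.castSucc) (x i.succ)) -
        (x i.succ - x i.castSucc) • f (t i)‖
      ≤ ∑ i : Fin n, ∫⁻ s in Icc (x i.castSucc) (x i.succ), ‖f s - f (t i)‖ₑ :=
        Finset.sum_le_sum fun i _ => (ofReal_norm _).trans_le (hterm i)
    _ ≤ ENNReal.ofReal (ε / 2) := hsum n x t hx hfine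
    _ < ENNReal.ofReal ε := (ENNReal.ofReal_lt_ofReal_iff hε).2 (half_lt_self hε)

/-- A strongly measurable `f : [0,1] → Y` whose indefinite Pettis integral `ν` has finite
variation, and which is McShane integrable with McShane integral `ν` on each interval, is
variationally McShane integrable. -/
theorem variationally_mcshane_of_pettis_finite_variation
    {Y : Type*} [NormedAddCommGroup Y] [NormedSpace ℝ Y] [CompleteSpace Y]
    (f : ℝ → Y) (hf : StronglyMeasurable f)
    (ν : Set ℝ → Y)
    -- `ν` is the indefinite Pettis integral of `f` on `[0,1]`
    (hPettis : ∀ φ : StrongDual ℝ Y,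
      IntegrableOn (fun s => φ (f s)) (Set.Icc (0 : ℝ) 1) volume ∧
      ∀ A : Set ℝ, MeasurableSet A →
        φ (ν A) = ∫ s in A ∩ Set.Icc (0 : ℝ) 1, φ (f s) ∂volume)
    -- `ν` has finite variation
    (M : ℝ)
    (hM : ∀ (n : ℕ) (A : Fin n → Set ℝ), (∀ i, MeasurableSet (A i)) →
      Pairwise (Function.onFun Disjoint A) → (∑ i, ‖ν (A i)‖) ≤ M)
    -- `f` is McShane integrable with integral `ν` on every subinterval of `[0,1]`
    (hMc : ∀ a b : ℝ, 0 ≤ a → a ≤ b → b ≤ 1 →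
      HasMcShaneIntegral f a b (ν (Set.Icc a b))) :
    -- variational McShane integrability
    ∀ ε > (0 : ℝ), ∃ δ : ℝ → ℝ, (∀ s, 0 < δ s) ∧
      ∀ (n : ℕ) (x : Fin (n + 1) → ℝ) (t : Fin n → ℝ),
        IsIntervalPartition n 0 1 x → IsMcShaneTagged n t → IsMcShaneFine δ n x t →
        (∑ i : Fin n,
          ‖ν (Set.Icc (x i.castSucc) (x i.succ)) -
            (x i.succ - x i.castSucc) • f (t i)‖) < ε :=
  variationally_mcshane_of_pettis_finite_variation_general f hf ν hPettis M hM
end
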